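/- arXiv:1012.1094 — 4 statements merged into one kernel-verified Lean document; each statement's English description precedes it below -/
import Mathlib

section
/- Every topological space X whose cardinality is less than the dominating number 𝔡 (i.e., |X| < |D| for every dominating family D ⊆ ω^ω) has property E*_ω. -/
open Set Filter Topology Cardinal

/-- A neighbourhood assignment for a topological space `X`: a function assigning to each
point an open set containing it. -/
def IsNbhdAssignment {X : Type*} [TopologicalSpace X] (N : X → Set X) : Prop :=
  ∀ x : X, IsOpen (N x) ∧ x ∈ N x

/-- `X` is a D-space: for every neighbourhood assignment `N` there is a closed discrete
subset `A` with `⋃ x ∈ A, N x = univ`. -/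
def IsDSpace (X : Type*) [TopologicalSpace X] : Prop :=
  ∀ N : X → Set X, IsNbhdAssignment N →
    ∃ A : Set X, IsClosed A ∧ DiscreteTopology ↥A ∧ ⋃ x ∈ A, N x = Set.univ

/-- Property `D_ω`: for every neighbourhood assignment `N` there is a countable family of
closed discrete sets `A n` with `X = ⋃ n, ⋃ x ∈ A n, N x`. -/
def HasDOmega (X : Type*) [TopologicalSpace X] : Prop :=
  ∀ N : X → Set X, IsNbhdAssignment N →
    ∃ A : ℕ → Set X, (∀ n, IsClosed (A n) ∧ DiscreteTopology ↥(A n)) ∧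
      ⋃ n, ⋃ x ∈ A n, N x = Set.univ

/-- Property `E*_ω` (the Menger property for countable covers): for every sequence of
countable open covers there are finite subfamilies whose overall union covers `X`. -/
def HasEStarOmega (X : Type*) [TopologicalSpace X] : Prop :=
  ∀ u : ℕ → Set (Set X),
    (∀ n, (u n).Countable ∧ (∀ U ∈ u n, IsOpen U) ∧ ⋃₀ u n = Set.univ) →
    ∃ v : ℕ → Set (Set X), (∀ n, v n ⊆ u n ∧ (v n).Finite) ∧
      ⋃ n, ⋃₀ v n = Set.univ

/-- A family of sets is locally finite if every point has a neighbourhood meeting only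
finitely many members of the family. -/
def LocallyFiniteFamily {X : Type*} [TopologicalSpace X] (F : Set (Set X)) : Prop :=
  ∀ x : X, ∃ U ∈ nhds x, {s ∈ F | (s ∩ U).Nonempty}.Finite

/-- A family of sets is locally countable if every point has a neighbourhood meeting at
most countably many members of the family. -/
def LocallyCountableFamily {X : Type*} [TopologicalSpace X] (F : Set (Set X)) : Prop :=
  ∀ x : X, ∃ U ∈ nhds x, {s ∈ F | (s ∩ U).Nonempty}.Countable

/-- `X` is subparacompact: every open cover has a σ-locally finite closed refinement
which is itself a cover. -/
def Subparacompact (X : Type*) [TopologicalSpace X] : Prop :=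
  ∀ u : Set (Set X), (∀ U ∈ u, IsOpen U) → ⋃₀ u = Set.univ →
    ∃ F : ℕ → Set (Set X),
      (∀ n, LocallyFiniteFamily (F n)) ∧
      (∀ n, ∀ s ∈ F n, IsClosed s) ∧
      (∀ n, ∀ s ∈ F n, ∃ U ∈ u, s ⊆ U) ∧
      ⋃₀ (⋃ n, F n) = Set.univ

/-- A family `D ⊆ ω^ω` is dominating if every `f : ℕ → ℕ` is eventually dominated by
some member of `D`. -/
def Dominating (D : Set (ℕ → ℕ)) : Prop :=
  ∀ f : ℕ → ℕ, ∃ g ∈ D, ∀ᶠ n in Filter.atTop, f n ≤ g n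

/-!
Enumerate the `n`-th cover as `e n 0, e n 1, …` and let `φ x n` be an index with
`x ∈ e n (φ x n)`. The family `{φ x | x ∈ X}` has fewer than `𝔡` members, so it is not
dominating: some `f` is not eventually dominated by any `φ x`, i.e. every `x` has an `n` with
`φ x n < f n`. Then the finite families `{e n k | k ≤ f n}` together cover `X`.
-/

universe u

lemma not_dominating_range_of_forall_dominating_mk_lt {X : Type u}
    (hsmall : ∀ D : Set (ℕ → ℕ), Dominating D → #X < lift.{u} #D) (φ : X → ℕ → ℕ) :
    ¬ Dominating (range φ) := fun hdom =>
  (hsmall _ hdom).not_ge (by simpa using mk_range_le_lift (f := φ))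

lemma exists_forall_exists_lt_of_not_dominating_range {X : Type*} {φ : X → ℕ → ℕ}
    (h : ¬ Dominating (range φ)) : ∃ f : ℕ → ℕ, ∀ x, ∃ n, φ x n < f n := by
  obtain ⟨f, hf⟩ := not_forall.1 h
  refine ⟨f, fun x => ?_⟩
  obtain ⟨n, hn⟩ := (not_eventually.1 fun hx => hf ⟨φ x, mem_range_self x, hx⟩).exists
  exact ⟨n, not_le.1 hn⟩

lemma exists_seq_eq_range_of_countable_cover {X : Type*} [Nonempty X] {u : Set (Set X)}
    (hc : u.Countable) (hcov : ⋃₀ u = Set.univ) : ∃ e : ℕ → Set X, range e = u := by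
  obtain ⟨U, hU, -⟩ := (hcov ▸ mem_univ (Classical.arbitrary X) : _ ∈ ⋃₀ u)
  obtain ⟨e, he⟩ := hc.exists_eq_range ⟨U, hU⟩
  exact ⟨e, he.symm⟩

lemma exists_finite_subfamilies_cover_of_forall_dominating_mk_lt {X : Type u}
    (hsmall : ∀ D : Set (ℕ → ℕ), Dominating D → #X < lift.{u} #D)
    (u : ℕ → Set (Set X)) (hc : ∀ n, (u n).Countable) (hcov : ∀ n, ⋃₀ u n = Set.univ) :
    ∃ v : ℕ → Set (Set X), (∀ n, v n ⊆ u n ∧ (v n).Finite) ∧ ⋃ n, ⋃₀ v n = Set.univ := by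
  rcases isEmpty_or_nonempty X with hX | hX
  · exact ⟨fun _ => ∅, fun _ => ⟨empty_subset _, finite_empty⟩, eq_univ_of_forall hX.elim⟩
  choose e he using fun n => exists_seq_eq_range_of_countable_cover (hc n) (hcov n)
  have hindex : ∀ x n, ∃ k, x ∈ e n k := fun x n => by
    simpa [← he n] using (hcov n ▸ mem_univ x : x ∈ ⋃₀ u n)
  choose φ hφ using hindex
  obtain ⟨f, hf⟩ := exists_forall_exists_lt_of_not_dominating_range
    (not_dominating_range_of_forall_dominating_mk_lt hsmall φ)
  refine ⟨fun n => e n '' Iic (f n),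
    fun n => ⟨he n ▸ image_subset_range _ _, (finite_Iic _).image _⟩, ?_⟩
  refine eq_univ_of_forall fun x => ?_
  obtain ⟨n, hn⟩ := hf x
  exact mem_iUnion.2 ⟨n, e n (φ x n), mem_image_of_mem _ hn.le, hφ x n⟩

/-- Every topological space whose cardinality is less than the dominating
number `𝔡` (i.e. `|X| < |D|` for every dominating family `D ⊆ ω^ω`) has property
`E*_ω`. -/
theorem card_lt_d_hasEStarOmega {X : Type u} [TopologicalSpace X]
    (hsmall : ∀ D : Set (ℕ → ℕ), Dominating D →
      Cardinal.mk X < Cardinal.lift.{u} (Cardinal.mk D)) :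
    HasEStarOmega X := fun u hu =>
  exists_finite_subfamilies_cover_of_forall_dominating_mk_lt hsmall u
    (fun n => (hu n).1) (fun n => (hu n).2.2)
end

section
/- If there exists a Michael space, then every productively Lindelöf regular topological space has the Menger property (equivalently, property E*_ω). -/
open Set Filter Topology Cardinal

/-!
If `X` is not Menger, enumerate the witnessing countable covers as `U n k` and let `φ x n` be the
least `k` with `x ∈ U n k`. Each coordinate of `φ` is upper semicontinuous, and the failure of the
Menger property says exactly that `φ(X)` is cofinal in `(ω^ω, ≤)`.

Given an open cover of `ω^ω × Y`, each `(f, y)` has a neighbourhood `{g | ∀ i < n, g i ≤ f i} × B`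
covered by finitely many members: `Iic f` is compact, so the tube lemma applies, and an open set
containing `Iic f` contains such a box. Pulling these boxes back along `φ` gives an open cover of
`X × Y`; a countable subcover of it, together with cofinality of `φ`, yields a countable subcover of
`ω^ω × Y`. Hence `X × Y` cannot be Lindelöf when `Y` is a Michael space.
-/

namespace PiNat

variable {E : ℕ → Type*} [∀ n, TopologicalSpace (E n)] [∀ n, DiscreteTopology (E n)]

theorem exists_cylinder_subset {A : Set (∀ n, E n)} (hA : IsOpen A) {x : ∀ n, E n}
    (hx : x ∈ A) : ∃ n, cylinder x n ⊆ A := by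
  obtain ⟨_, ⟨y, n, rfl⟩, hxy, hyA⟩ :=
    (isTopologicalBasis_cylinders E).exists_subset_of_mem_open hx hA
  exact ⟨n, mem_cylinder_iff_eq.1 hxy ▸ hyA⟩

theorem isOpen_setOf_cylinder_subset (A : Set (∀ n, E n)) (n : ℕ) :
    IsOpen {x | cylinder x n ⊆ A} :=
  isOpen_iff_forall_mem_open.2 fun x hx =>
    ⟨cylinder x n, fun y hy => show cylinder y n ⊆ A from mem_cylinder_iff_eq.1 hy ▸ hx,
      isOpen_cylinder E x n, self_mem_cylinder x n⟩

end PiNat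

open PiNat

theorem isCompact_Iic_nat_nat (f : ℕ → ℕ) : IsCompact (Iic f) :=
  Icc_bot (a := f) ▸ isCompact_Icc

def prefixIic (f : ℕ → ℕ) (n : ℕ) : Set (ℕ → ℕ) := {g | ∀ i < n, g i ≤ f i}

theorem mem_prefixIic_of_le {f g h : ℕ → ℕ} {n : ℕ} (hgh : g ≤ h) (hh : h ∈ prefixIic f n) :
    g ∈ prefixIic f n :=
  fun i hi => (hgh i).trans (hh i hi)

theorem exists_prefixIic_subset {A : Set (ℕ → ℕ)} (hA : IsOpen A) {f : ℕ → ℕ}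
    (hfA : Iic f ⊆ A) : ∃ n, prefixIic f n ⊆ A := by
  obtain ⟨n, hn⟩ : ∃ n, Iic f ⊆ {x | cylinder x n ⊆ A} :=
    (isCompact_Iic_nat_nat f).elim_directed_cover _
      (isOpen_setOf_cylinder_subset A)
      (fun x hx => mem_iUnion.2 (exists_cylinder_subset hA (hfA hx)))
      (directed_of_isDirected_le fun _ _ hmn _ hx => (cylinder_anti _ hmn).trans hx)
  -- `g ⊓ f` lies in `Iic f` and agrees with `g` below `n`.
  refine ⟨n, fun g hg => hn (show g ⊓ f ≤ f from inf_le_right) fun i hi => ?_⟩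
  exact (min_eq_left (hg i hi)).symm

theorem exists_prefixIic_prod_subset_biUnion {Y ι : Type*} [TopologicalSpace Y]
    {U : ι → Set ((ℕ → ℕ) × Y)} (hU : ∀ i, IsOpen (U i)) (hcov : ⋃ i, U i = Set.univ)
    (f : ℕ → ℕ) (y : Y) :
    ∃ (n : ℕ) (B : Set Y) (t : Finset ι), IsOpen B ∧ y ∈ B ∧
      prefixIic f n ×ˢ B ⊆ ⋃ i ∈ t, U i := by
  obtain ⟨t, ht⟩ := ((isCompact_Iic_nat_nat f).prod isCompact_singleton).elim_finite_subcover
    U hU (hcov ▸ Set.subset_univ _)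
  obtain ⟨A, B, hA, hB, hfA, hyB, hAB⟩ := generalized_tube_lemma (isCompact_Iic_nat_nat f)
    isCompact_singleton (isOpen_biUnion fun i _ => hU i) ht
  obtain ⟨n, hn⟩ := exists_prefixIic_subset hA hfA
  exact ⟨n, B, t, hB, hyB rfl, (prod_mono hn le_rfl).trans hAB⟩

theorem isOpen_preimage_prefixIic {X : Type*} [TopologicalSpace X] {φ : X → ℕ → ℕ}
    (hφ : ∀ i, UpperSemicontinuous fun x => φ x i) (f : ℕ → ℕ) (n : ℕ) :
    IsOpen (φ ⁻¹' prefixIic f n) := by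
  have h : φ ⁻¹' prefixIic f n = ⋂ i ∈ Iio n, (fun x => φ x i) ⁻¹' Iio (f i + 1) := by
    ext x; simp [prefixIic]
  rw [h]
  exact (finite_Iio n).isOpen_biInter fun i _ =>
    upperSemicontinuous_iff_isOpen_preimage.1 (hφ i) _

theorem lindelofSpace_prod_of_cofinal_upperSemicontinuous {X Y : Type*} [TopologicalSpace X]
    [TopologicalSpace Y] [LindelofSpace (X × Y)] {φ : X → ℕ → ℕ}
    (hφ : ∀ i, UpperSemicontinuous fun x => φ x i) (hcof : ∀ g, ∃ x, g ≤ φ x) :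
    LindelofSpace ((ℕ → ℕ) × Y) := by
  refine ⟨isLindelof_of_countable_subcover fun {ι} U hU hcov => ?_⟩
  choose n B F hB hyB hsub using
    exists_prefixIic_prod_subset_biUnion hU (univ_subset_iff.1 hcov)
  let W : X × Y → Set (X × Y) := fun p =>
    (φ ⁻¹' prefixIic (φ p.1) (n (φ p.1) p.2)) ×ˢ B (φ p.1) p.2
  have hW : ∀ p, W p ∈ 𝓝 p := fun p =>
    ((isOpen_preimage_prefixIic hφ _ _).prod (hB _ _)).mem_nhds
      ⟨fun _ _ => le_rfl, hyB _ _⟩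
  obtain ⟨S, hS, hSW⟩ := LindelofSpace.elim_nhds_subcover W hW
  have hcount : (⋃ p ∈ S, (F (φ p.1) p.2 : Set ι)).Countable :=
    hS.biUnion fun p _ => (F (φ p.1) p.2).countable_toSet
  refine ⟨_, hcount, ?_⟩
  rintro ⟨g, y⟩ -
  obtain ⟨x, hgx⟩ := hcof g
  obtain ⟨p, hpS, hxp, hyp⟩ := mem_iUnion₂.1 (hSW ▸ mem_univ (x, y))
  have hgy : (g, y) ∈ prefixIic (φ p.1) _ ×ˢ B (φ p.1) p.2 := ⟨mem_prefixIic_of_le hgx hxp, hyp⟩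
  obtain ⟨i, hi, hgy⟩ := mem_iUnion₂.1 (hsub _ _ hgy)
  exact mem_iUnion₂.2 ⟨i, mem_biUnion hpS hi, hgy⟩

theorem exists_cofinal_upperSemicontinuous_of_not_hasEStarOmega {X : Type*}
    [TopologicalSpace X] (hX : ¬ HasEStarOmega X) :
    ∃ φ : X → ℕ → ℕ, (∀ i, UpperSemicontinuous fun x => φ x i) ∧ ∀ g, ∃ x, g ≤ φ x := by
  simp only [HasEStarOmega, not_forall, not_exists, not_and] at hX
  obtain ⟨u, hu, hnot⟩ := hX
  have : Nonempty X := not_isEmpty_iff.1 fun _ =>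
    hnot (fun _ => ∅) (fun _ => ⟨empty_subset _, finite_empty⟩) (Subsingleton.elim _ _)
  choose U hU using fun n => (hu n).1.exists_eq_range <|
    Nonempty.of_sUnion_eq_univ (hu n).2.2
  have hmem : ∀ x n, ∃ k, x ∈ U n k := fun x n => by
    have hx : x ∈ ⋃₀ u n := (hu n).2.2 ▸ mem_univ x
    rwa [hU n, sUnion_range, mem_iUnion] at hx
  classical
  refine ⟨fun x n => Nat.find (hmem x n), fun n => ?_, fun g => ?_⟩
  · refine upperSemicontinuous_iff_isOpen_preimage.2 fun k => ?_
    have h : (fun x => Nat.find (hmem x n)) ⁻¹' Iio k = ⋃ i < k, U n i := by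
      ext x; simp
    exact h ▸ isOpen_biUnion fun i _ => (hu n).2.1 _ (hU n ▸ mem_range_self i)
  · by_contra! hg
    refine hnot (fun n => U n '' Iio (g n))
      (fun n => ⟨hU n ▸ image_subset_range _ _, (finite_Iio _).image _⟩) ?_
    refine eq_univ_of_forall fun x => ?_
    obtain ⟨n, hn⟩ : ∃ n, Nat.find (hmem x n) < g n := by simpa [Pi.le_def] using hg x
    obtain ⟨k, hk, hxk⟩ := Nat.find_lt_iff _ _ |>.1 hn
    exact mem_iUnion.2 ⟨n, U n k, mem_image_of_mem _ hk, hxk⟩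

theorem michael_space_implies_productively_lindelof_menger_general
    (hMichael : ∃ (Y : Type) (_ : TopologicalSpace Y), RegularSpace Y ∧
      LindelofSpace Y ∧ ¬ LindelofSpace ((ℕ → ℕ) × Y))
    {X : Type*} [TopologicalSpace X]
    (hPL : ∀ (Y : Type) (_ : TopologicalSpace Y), RegularSpace Y → LindelofSpace Y →
      LindelofSpace (X × Y)) :
    HasEStarOmega X := by
  by_contra hX
  obtain ⟨φ, hφ, hcof⟩ := exists_cofinal_upperSemicontinuous_of_not_hasEStarOmega hX
  obtain ⟨Y, _, hYreg, hYL, hnot⟩ := hMichael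
  have := hPL Y _ hYreg hYL
  exact hnot (lindelofSpace_prod_of_cofinal_upperSemicontinuous hφ hcof)

/-- If there exists a Michael space (a regular Lindelöf space `Y` with
`ω^ω × Y` not Lindelöf), then every productively Lindelöf regular space has the Menger
property `E*_ω`. -/
theorem michael_space_implies_productively_lindelof_menger
    (hMichael : ∃ (Y : Type) (_ : TopologicalSpace Y), RegularSpace Y ∧
      LindelofSpace Y ∧ ¬ LindelofSpace ((ℕ → ℕ) × Y))
    {X : Type*} [TopologicalSpace X] [RegularSpace X]
    (hPL : ∀ (Y : Type) (_ : TopologicalSpace Y), RegularSpace Y → LindelofSpace Y →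
      LindelofSpace (X × Y)) :
    HasEStarOmega X :=
  michael_space_implies_productively_lindelof_menger_general hMichael hPL
end

section
/- If there exist a Michael space and a productively Lindelöf regular topological space X without the Menger property, then X × Y fails to be Lindelöf for some regular Lindelöf space Y; equivalently: if Y is a Michael space and X is a regular space that does not have the Menger property but admits a compact-valued upper semicontinuous set-valued map Φ : X ⇒ ω^ω with Φ(X) = ω^ω, then X × Y is not Lindelöf. -/
/-!
If `X × Y` were Lindelöf, then so would be `ω^ω × Y`: the correspondence
`(x, y) ↦ Φ x × {y}` is compact-valued, upper hemicontinuous and covers `ω^ω × Y`, and such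
correspondences carry Lindelöf sets to Lindelöf sets (cover each compact value by finitely
many members of an open cover; the points whose value lies in that finite union form an open
neighbourhood, and countably many of these neighbourhoods cover the domain).
-/

open Set Filter Topology Cardinal

section

variable {α β γ δ : Type*} [TopologicalSpace α] [TopologicalSpace β]
  [TopologicalSpace γ] [TopologicalSpace δ]

theorem UpperHemicontinuous.prod {f : α → Set β} {g : γ → Set δ}
    (hf : UpperHemicontinuous f) (hfc : ∀ x, IsCompact (f x))
    (hg : UpperHemicontinuous g) (hgc : ∀ y, IsCompact (g y)) :
    UpperHemicontinuous fun p : α × γ ↦ f p.1 ×ˢ g p.2 := by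
  refine upperHemicontinuous_iff_forall_isOpen.2 fun p w hw hpw ↦ ?_
  obtain ⟨u, v, hu, hv, hfu, hgv, huv⟩ := generalized_tube_lemma (hfc p.1) (hgc p.2) hw hpw
  filter_upwards [(hf.forall_isOpen p.1 u hu hfu).prod_nhds (hg.forall_isOpen p.2 v hv hgv)]
    with q ⟨hqu, hqv⟩
  exact (prod_mono hqu hqv).trans huv

theorem IsLindelof.biUnion_of_upperHemicontinuous {f : α → Set β} {s : Set α}
    (hs : IsLindelof s) (hf : UpperHemicontinuous f) (hfc : ∀ x ∈ s, IsCompact (f x)) :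
    IsLindelof (⋃ x ∈ s, f x) := by
  refine isLindelof_of_countable_subcover fun U hUo hcover ↦ ?_
  have hfin : ∀ x ∈ s, ∃ t : Finset _, f x ⊆ ⋃ i ∈ t, U i := fun x hx ↦
    (hfc x hx).elim_finite_subcover U hUo ((subset_biUnion_of_mem hx).trans hcover)
  choose! t ht using hfin
  have hopen : ∀ x, IsOpen (f ⁻¹' Iic (⋃ i ∈ t x, U i)) := fun x ↦
    upperHemicontinuous_iff_isOpen_preimage_Iic.1 hf _ (isOpen_biUnion fun i _ ↦ hUo i)
  obtain ⟨r, hr, hsr⟩ := hs.elim_countable_subcover _ hopen fun x hx ↦ mem_iUnion.2 ⟨x, ht x hx⟩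
  refine ⟨⋃ y ∈ r, ↑(t y), hr.biUnion fun y _ ↦ (t y).countable_toSet, fun z hz ↦ ?_⟩
  obtain ⟨x, hx, hzx⟩ := mem_iUnion₂.1 hz
  obtain ⟨y, hyr, hxy⟩ := mem_iUnion₂.1 (hsr hx)
  obtain ⟨i, hit, hiU⟩ := mem_iUnion₂.1 (hxy hzx)
  exact mem_iUnion₂.2 ⟨i, mem_iUnion₂.2 ⟨y, hyr, hit⟩, hiU⟩

theorem LindelofSpace.of_upperHemicontinuous [LindelofSpace α] {f : α → Set β}
    (hf : UpperHemicontinuous f) (hfc : ∀ x, IsCompact (f x)) (hcover : ⋃ x, f x = Set.univ) :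
    LindelofSpace β := by
  rw [← isLindelof_univ_iff, ← hcover, ← biUnion_univ]
  exact isLindelof_univ.biUnion_of_upperHemicontinuous hf fun x _ ↦ hfc x

end

theorem not_lindelof_prod_of_michael_general {X Y : Type*} [TopologicalSpace X]
    [TopologicalSpace Y]
    (hMichael : ¬ LindelofSpace ((ℕ → ℕ) × Y))
    (Φ : X → Set (ℕ → ℕ))
    (hcomp : ∀ x, IsCompact (Φ x))
    (husc : ∀ V : Set (ℕ → ℕ), IsOpen V → IsOpen {x | Φ x ⊆ V})
    (hsurj : ⋃ x, Φ x = Set.univ) :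
    ¬ LindelofSpace (X × Y) := by
  intro hXY
  have hΨ : UpperHemicontinuous fun p : X × Y ↦ Φ p.1 ×ˢ ({p.2} : Set Y) :=
    (upperHemicontinuous_iff_isOpen_preimage_Iic.2 husc).prod hcomp
      upperHemicontinuous_singleton_id fun _ ↦ isCompact_singleton
  refine hMichael (LindelofSpace.of_upperHemicontinuous hΨ
    (fun p ↦ (hcomp p.1).prod isCompact_singleton) (eq_univ_of_forall fun ⟨f, y⟩ ↦ ?_))
  obtain ⟨x, hx⟩ := mem_iUnion.1 (hsurj ▸ mem_univ f)
  exact mem_iUnion.2 ⟨(x, y), hx, rfl⟩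

/-- If `Y` is a Michael space (regular Lindelöf with `ω^ω × Y` not
Lindelöf) and `X` is a regular space without the Menger property admitting a
compact-valued upper semicontinuous map `Φ : X ⇒ ω^ω` with `Φ(X) = ω^ω`, then `X × Y`
is not Lindelöf. -/
theorem not_lindelof_prod_of_michael {X Y : Type*} [TopologicalSpace X] [RegularSpace X]
    [TopologicalSpace Y] [RegularSpace Y] [LindelofSpace Y]
    (hMichael : ¬ LindelofSpace ((ℕ → ℕ) × Y))
    (hnoMenger : ¬ HasEStarOmega X)
    (Φ : X → Set (ℕ → ℕ))
    (hcomp : ∀ x, IsCompact (Φ x))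
    (husc : ∀ V : Set (ℕ → ℕ), IsOpen V → IsOpen {x | Φ x ⊆ V})
    (hsurj : ⋃ x, Φ x = Set.univ) :
    ¬ LindelofSpace (X × Y) :=
  not_lindelof_prod_of_michael_general hMichael Φ hcomp husc hsurj
end

section
/- Let X be a topological space and let F be a locally finite family of closed subsets of X, each of which is a D-space in the subspace topology. Then the union ⋃F is a closed subset of X which is a D-space in the subspace topology. -/
open Set Filter Topology Cardinal

/-! Choose in each member `s` of `F` a closed discrete kernel for the given neighbourhood
assignment. By local finiteness, near any point the union of these kernels agrees with a finite
union of closed discrete sets, which is again closed and discrete; so the union of all kernels is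
a closed discrete kernel for `⋃₀ F`. -/

section DSubset

variable {X : Type*} [TopologicalSpace X]

theorem LocallyFiniteFamily.locallyFinite {F : Set (Set X)} (hF : LocallyFiniteFamily F) :
    LocallyFinite ((↑) : F → Set X) := fun x => by
  obtain ⟨U, hU, hfin⟩ := hF x
  exact ⟨U, hU, (hfin.preimage Subtype.val_injective.injOn).subset fun s hs => ⟨s.2, hs⟩⟩

theorem LocallyFinite.isClosed_and_isDiscrete_iUnion {ι : Type*} {A : ι → Set X}
    (hA : LocallyFinite A) (hcl : ∀ i, IsClosed (A i)) (hd : ∀ i, IsDiscrete (A i)) :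
    IsClosed (⋃ i, A i) ∧ IsDiscrete (⋃ i, A i) := by
  refine isClosed_and_discrete_iff.mpr fun x => ?_
  obtain ⟨W, hW, hfin⟩ := hA x
  have hnear : Disjoint (𝓝[≠] x) (𝓟 (⋃ i ∈ {i | (A i ∩ W).Nonempty}, A i)) :=
    isClosed_and_discrete_iff.mp
      ⟨hfin.isClosed_biUnion fun i _ => hcl i,
        .biUnion hfin (fun i _ => hd i) fun i _ => hcl i⟩ x
  rw [disjoint_principal_right] at hnear ⊢
  filter_upwards [hnear, mem_nhdsWithin_of_mem_nhds hW] with y hy hyW hyA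
  obtain ⟨i, hi⟩ := mem_iUnion.mp hyA
  exact hy (mem_biUnion ⟨y, hi, hyW⟩ hi)

/-- The D-property of the subspace `s`, with kernels that are closed and discrete in `X`. -/
def IsDSubset (s : Set X) : Prop :=
  ∀ N : X → Set X, IsNbhdAssignment N →
    ∃ A ⊆ s, IsClosed A ∧ IsDiscrete A ∧ s ⊆ ⋃ x ∈ A, N x

theorem IsDSubset.isDSpace {s : Set X} (hD : IsDSubset s) : IsDSpace s := by
  classical
  intro N hN
  choose V hVo hV using fun y : s => isOpen_induced_iff.mp (hN y).1
  let N' : X → Set X := fun x => if hx : x ∈ s then V ⟨x, hx⟩ else univ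
  have hN' : IsNbhdAssignment N' := fun x => by
    by_cases hx : x ∈ s
    · simpa [N', hx, ← hV ⟨x, hx⟩] using And.intro (hVo ⟨x, hx⟩) (hN ⟨x, hx⟩).2
    · simp [N', hx]
  obtain ⟨A, hAs, hAc, hAd, hcov⟩ := hD N' hN'
  refine ⟨(↑) ⁻¹' A, hAc.preimage continuous_subtype_val,
    (hAd.preimage continuous_subtype_val.continuousOn Subtype.val_injective).to_subtype,
    eq_univ_of_forall fun y => ?_⟩
  obtain ⟨x, hxA, hyx⟩ := mem_iUnion₂.mp (hcov y.2)
  refine mem_iUnion₂.mpr ⟨⟨x, hAs hxA⟩, hxA, ?_⟩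
  simpa [N', hAs hxA, ← hV] using hyx

theorem IsClosed.isDSubset_of_isDSpace {s : Set X} (hs : IsClosed s) (hD : IsDSpace s) :
    IsDSubset s := by
  intro N hN
  obtain ⟨A, hAc, hAd, hcov⟩ := hD (fun y : s => Subtype.val ⁻¹' N y)
    fun y => ⟨(hN y).1.preimage continuous_subtype_val, (hN y).2⟩
  refine ⟨(↑) '' A, Subtype.coe_image_subset s A,
    hs.isClosedEmbedding_subtypeVal.isClosedMap A hAc, IsDiscrete.image ⟨hAd⟩ IsInducing.subtypeVal, fun x hx => ?_⟩
  obtain ⟨y, hyA, hxy⟩ := mem_iUnion₂.mp (hcov.symm ▸ mem_univ (⟨x, hx⟩ : s))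
  exact mem_biUnion (mem_image_of_mem _ hyA) hxy

theorem IsDSubset.iUnion_of_locallyFinite {ι : Type*} {F : ι → Set X} (hF : LocallyFinite F)
    (hD : ∀ i, IsDSubset (F i)) : IsDSubset (⋃ i, F i) := by
  intro N hN
  choose A hAF hAc hAd hcov using fun i => hD i N hN
  obtain ⟨hUc, hUd⟩ := (hF.subset hAF).isClosed_and_isDiscrete_iUnion hAc hAd
  refine ⟨⋃ i, A i, iUnion_mono hAF, hUc, hUd, iUnion_subset fun i => ?_⟩
  exact (hcov i).trans (biUnion_subset_biUnion_left (subset_iUnion A i))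

end DSubset

/-- The union of a locally finite family of closed D-subspaces is a closed
D-subspace. -/
theorem locallyFinite_union_closed_dSpaces {X : Type*} [TopologicalSpace X]
    (F : Set (Set X)) (hlf : LocallyFiniteFamily F)
    (hcl : ∀ s ∈ F, IsClosed s) (hD : ∀ s ∈ F, IsDSpace ↥s) :
    IsClosed (⋃₀ F) ∧ IsDSpace ↥(⋃₀ F) := by
  have hF := hlf.locallyFinite
  rw [sUnion_eq_iUnion]
  refine ⟨hF.isClosed_iUnion fun s => hcl s s.2, IsDSubset.isDSpace ?_⟩
  exact .iUnion_of_locallyFinite hF fun s => (hcl s s.2).isDSubset_of_isDSpace (hD s s.2)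
end
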